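/- arXiv:1511.05794 — 4 statements merged into one kernel-verified Lean document; each statement's English description precedes it below -/
import Mathlib

section
/- On the set ℝ with its usual multiplication, define a multivalued addition ⊞ by: x ⊞ y := {x} if |x| > |y|; x ⊞ y := {y} if |y| > |x|; x ⊞ x := {x}; and x ⊞ (−x) := [−|x|, |x|] (the closed interval). Then (ℝ, ⊞, ·), with additive identity 0 and multiplicative identity 1, is a hyperfield: ⊞ is commutative and associative (⋃_{t ∈ x⊞y} t⊞z = ⋃_{t ∈ y⊞z} x⊞t), x ⊞ 0 = {x} for all x, each x has −x as its unique additive inverse (0 ∈ x ⊞ y if and only if y = −x), x ∈ y ⊞ (−z) if and only if y ∈ x ⊞ z, and t·(x ⊞ y) ⊆ (tx) ⊞ (ty) for all t, x, y (sets multiplied elementwise). -/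
/-- The multivalued addition of Viro's real triangle hyperfield `𝒯ℝ`. -/
noncomputable def tradd (x y : ℝ) : Set ℝ :=
  if x = y then {x}
  else if x = -y then Set.Icc (-|x|) |x|
  else if |y| < |x| then {x} else {y}

/-- Membership predicate for `tradd`. -/
def M (s x y : ℝ) : Prop :=
  (s = x ∧ |y| ≤ |x|) ∨ (s = y ∧ |x| ≤ |y|) ∨ (x = -y ∧ |s| ≤ |x|)

lemma mem_tradd {s x y : ℝ} : s ∈ tradd x y ↔ M s x y := by
  unfold tradd M
  split_ifs with h1 h2 h3
  · subst h1
    simp only [Set.mem_singleton_iff]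
    constructor
    · intro h; exact Or.inl ⟨h, le_refl _⟩
    · rintro (⟨h, -⟩ | ⟨h, -⟩ | ⟨h, hs⟩)
      · exact h
      · exact h
      · have hx : x = 0 := by linarith
        rw [hx] at hs ⊢
        simp only [abs_zero] at hs
        exact abs_eq_zero.mp (le_antisymm hs (abs_nonneg s))
  · subst h2
    rw [Set.mem_Icc, ← abs_le]
    constructor
    · intro h; exact Or.inr (Or.inr ⟨rfl, h⟩)
    · rintro (⟨h, -⟩ | ⟨h, -⟩ | ⟨-, h⟩)
      · rw [h]
      · rw [h, abs_neg]
      · exact h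
  · simp only [Set.mem_singleton_iff]
    constructor
    · intro h; exact Or.inl ⟨h, h3.le⟩
    · rintro (⟨h, -⟩ | ⟨h, hle⟩ | ⟨h, -⟩)
      · exact h
      · exact absurd hle h3.not_ge
      · exact absurd h h2
  · have hle : |x| ≤ |y| := le_of_not_gt h3
    simp only [Set.mem_singleton_iff]
    constructor
    · intro h; exact Or.inr (Or.inl ⟨h, hle⟩)
    · rintro (⟨h, h'⟩ | ⟨h, -⟩ | ⟨h, -⟩)
      · rcases abs_eq_abs.mp (le_antisymm hle h') with h'' | h''
        · exact absurd h'' h1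
        · exact absurd h'' h2
      · exact h
      · exact absurd h h2

lemma M_comm {s x y : ℝ} : M s x y ↔ M s y x := by
  unfold M
  constructor
  · rintro (⟨h, h'⟩ | ⟨h, h'⟩ | ⟨h, h'⟩)
    · exact Or.inr (Or.inl ⟨h, h'⟩)
    · exact Or.inl ⟨h, h'⟩
    · refine Or.inr (Or.inr ⟨by rw [h, neg_neg], by rw [h, abs_neg] at h'; exact h'⟩)
  · rintro (⟨h, h'⟩ | ⟨h, h'⟩ | ⟨h, h'⟩)
    · exact Or.inr (Or.inl ⟨h, h'⟩)
    · exact Or.inl ⟨h, h'⟩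
    · refine Or.inr (Or.inr ⟨by rw [h, neg_neg], by rw [h, abs_neg] at h'; exact h'⟩)

/-- Membership predicate for the triple hypersum. -/
def Q (x y z u : ℝ) : Prop :=
  (((x = -y ∧ |z| ≤ |x|) ∨ (y = -z ∧ |x| ≤ |y|) ∨ (x = -z ∧ |y| ≤ |x|)) ∧
      |u| ≤ max |x| (max |y| |z|)) ∨
  (u = x ∧ |y| ≤ |x| ∧ |z| ≤ |x|) ∨ (u = y ∧ |x| ≤ |y| ∧ |z| ≤ |y|) ∨
  (u = z ∧ |x| ≤ |z| ∧ |y| ≤ |z|)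

lemma key {x y z u : ℝ} : (∃ t, M t x y ∧ M u t z) ↔ Q x y z u := by
  constructor
  · rintro ⟨t, h1, h2⟩
    unfold M at h1 h2
    unfold Q
    rcases h1 with ⟨rfl, hxy⟩ | ⟨rfl, hxy⟩ | ⟨hxy, ht⟩
    · rcases h2 with ⟨he, hz⟩ | ⟨he, hz⟩ | ⟨hz, hu⟩
      · exact Or.inr (Or.inl ⟨he, hxy, hz⟩)
      · exact Or.inr (Or.inr (Or.inr ⟨he, hz, le_trans hxy hz⟩))
      · exact Or.inl ⟨Or.inr (Or.inr ⟨hz, hxy⟩), le_trans hu (le_max_left _ _)⟩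
    · rcases h2 with ⟨he, hz⟩ | ⟨he, hz⟩ | ⟨hz, hu⟩
      · exact Or.inr (Or.inr (Or.inl ⟨he, hxy, hz⟩))
      · exact Or.inr (Or.inr (Or.inr ⟨he, le_trans hxy hz, hz⟩))
      · exact Or.inl ⟨Or.inr (Or.inl ⟨hz, hxy⟩),
          le_trans hu (le_trans (le_max_left _ _) (le_max_right _ _))⟩
    · rcases h2 with ⟨he, hz⟩ | ⟨he, hz⟩ | ⟨hz, hu⟩
      · refine Or.inl ⟨Or.inl ⟨hxy, le_trans hz ht⟩, ?_⟩
        rw [he]; exact le_trans ht (le_max_left _ _)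
      · rcases le_total |z| |x| with h | h
        · refine Or.inl ⟨Or.inl ⟨hxy, h⟩, ?_⟩
          rw [he]; exact le_trans h (le_max_left _ _)
        · have hy : |y| = |x| := by rw [hxy, abs_neg]
          exact Or.inr (Or.inr (Or.inr ⟨he, h, le_trans (le_of_eq hy) h⟩))
      · subst hz
        rw [abs_neg] at ht hu
        exact Or.inl ⟨Or.inl ⟨hxy, ht⟩, le_trans hu (le_trans ht (le_max_left _ _))⟩
  · unfold Q M
    rintro (⟨hopp, hu⟩ | ⟨he, h1, h2⟩ | ⟨he, h1, h2⟩ | ⟨he, h1, h2⟩)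
    · rcases hopp with ⟨hxy, hz⟩ | ⟨hyz, hx⟩ | ⟨hxz, hy⟩
      · have hyx : |y| = |x| := by rw [hxy, abs_neg]
        have hmax : max |x| (max |y| |z|) = |x| := by
          rw [hyx, max_eq_left hz, max_self]
        rw [hmax] at hu
        rcases le_total |z| |u| with h | h
        · exact ⟨u, Or.inr (Or.inr ⟨hxy, hu⟩), Or.inl ⟨rfl, h⟩⟩
        · exact ⟨-z, Or.inr (Or.inr ⟨hxy, (by rw [abs_neg]; exact hz)⟩),
            Or.inr (Or.inr ⟨rfl, (by rw [abs_neg]; exact h)⟩)⟩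
      · have hzy : |z| = |y| := by rw [hyz, abs_neg]
        have hmax : max |x| (max |y| |z|) = |y| := by
          rw [hzy, max_self, max_eq_right hx]
        rw [hmax] at hu
        exact ⟨y, Or.inr (Or.inl ⟨rfl, hx⟩), Or.inr (Or.inr ⟨hyz, hu⟩)⟩
      · have hzx : |z| = |x| := by rw [hxz, abs_neg]
        have hmax : max |x| (max |y| |z|) = |x| := by
          rw [hzx, max_eq_right hy, max_self]
        rw [hmax] at hu
        exact ⟨x, Or.inl ⟨rfl, hy⟩, Or.inr (Or.inr ⟨hxz, hu⟩)⟩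
    · exact ⟨x, Or.inl ⟨rfl, h1⟩, Or.inl ⟨he, h2⟩⟩
    · exact ⟨y, Or.inr (Or.inl ⟨rfl, h1⟩), Or.inl ⟨he, h2⟩⟩
    · rcases le_total |y| |x| with h | h
      · exact ⟨x, Or.inl ⟨rfl, h⟩, Or.inr (Or.inl ⟨he, h1⟩)⟩
      · exact ⟨y, Or.inr (Or.inl ⟨rfl, h⟩), Or.inr (Or.inl ⟨he, h2⟩)⟩

lemma Q_rot {x y z u : ℝ} : Q x y z u ↔ Q y z x u := by
  have hm : max |x| (max |y| |z|) = max |y| (max |z| |x|) := by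
    rw [max_comm, max_assoc]
  unfold Q
  rw [hm]
  constructor
  · rintro (⟨hopp, hu⟩ | h | h | h)
    · refine Or.inl ⟨?_, hu⟩
      rcases hopp with ⟨h, h'⟩ | ⟨h, h'⟩ | ⟨h, h'⟩
      · refine Or.inr (Or.inr ⟨by rw [h, neg_neg], ?_⟩)
        rw [h, abs_neg] at h'; exact h'
      · exact Or.inl ⟨h, h'⟩
      · refine Or.inr (Or.inl ⟨by rw [h, neg_neg], ?_⟩)
        rw [h, abs_neg] at h'; exact h'
    · exact Or.inr (Or.inr (Or.inr ⟨h.1, h.2.1, h.2.2⟩))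
    · exact Or.inr (Or.inl ⟨h.1, h.2.2, h.2.1⟩)
    · exact Or.inr (Or.inr (Or.inl ⟨h.1, h.2.2, h.2.1⟩))
  · rintro (⟨hopp, hu⟩ | h | h | h)
    · refine Or.inl ⟨?_, hu⟩
      rcases hopp with ⟨h, h'⟩ | ⟨h, h'⟩ | ⟨h, h'⟩
      · exact Or.inr (Or.inl ⟨h, h'⟩)
      · refine Or.inr (Or.inr ⟨by rw [h, neg_neg], ?_⟩)
        rw [h, abs_neg] at h'; exact h'
      · refine Or.inl ⟨by rw [h, neg_neg], ?_⟩
        rw [h, abs_neg] at h'; exact h'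
    · exact Or.inr (Or.inr (Or.inl ⟨h.1, h.2.2, h.2.1⟩))
    · exact Or.inr (Or.inr (Or.inr ⟨h.1, h.2.2, h.2.1⟩))
    · exact Or.inr (Or.inl ⟨h.1, h.2.1, h.2.2⟩)

theorem stmt3 :
    -- ⊞ is commutative
    (∀ x y : ℝ, tradd x y = tradd y x) ∧
    -- ⊞ is associative
    (∀ x y z : ℝ, (⋃ t ∈ tradd x y, tradd t z) = ⋃ t ∈ tradd y z, tradd x t) ∧
    -- 0 is the additive identity
    (∀ x : ℝ, tradd x 0 = {x}) ∧
    -- −x is the unique additive inverse of x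
    (∀ x y : ℝ, (0 : ℝ) ∈ tradd x y ↔ y = -x) ∧
    -- reversibility
    (∀ x y z : ℝ, x ∈ tradd y (-z) ↔ y ∈ tradd x z) ∧
    -- weak distributivity
    (∀ t x y : ℝ, (fun s => t * s) '' tradd x y ⊆ tradd (t * x) (t * y)) := by
  refine ⟨?_, ?_, ?_, ?_, ?_, ?_⟩
  · intro x y
    ext s
    rw [mem_tradd, mem_tradd]
    exact M_comm
  · intro x y z
    ext u
    simp only [Set.mem_iUnion, exists_prop, mem_tradd]
    rw [show (∃ t, M t x y ∧ M u t z) ↔ Q x y z u from key, Q_rot,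
      ← show (∃ t, M t y z ∧ M u t x) ↔ Q y z x u from key]
    constructor
    · rintro ⟨t, ht1, ht2⟩; exact ⟨t, ht1, M_comm.mp ht2⟩
    · rintro ⟨t, ht1, ht2⟩; exact ⟨t, ht1, M_comm.mp ht2⟩
  · intro x
    ext s
    rw [Set.mem_singleton_iff, mem_tradd]
    unfold M
    constructor
    · rintro (⟨h, -⟩ | ⟨h, h'⟩ | ⟨h, hs⟩)
      · exact h
      · rw [abs_zero] at h'
        rw [h, abs_eq_zero.mp (le_antisymm h' (abs_nonneg x))]
      · have hx : x = 0 := by simpa using h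
        rw [hx] at hs
        rw [abs_zero] at hs
        rw [abs_eq_zero.mp (le_antisymm hs (abs_nonneg s)), hx]
    · rintro h
      exact Or.inl ⟨h, by rw [abs_zero]; exact abs_nonneg x⟩
  · intro x y
    rw [mem_tradd]
    unfold M
    constructor
    · rintro (⟨h, hy⟩ | ⟨h, hx⟩ | ⟨h, -⟩)
      · rw [← h, abs_zero] at hy
        rw [← h] at *
        rw [abs_eq_zero.mp (le_antisymm hy (abs_nonneg y))]
        simp
      · rw [← h, abs_zero] at hx
        rw [abs_eq_zero.mp (le_antisymm hx (abs_nonneg x)), ← h]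
        simp
      · rw [h]; ring
    · rintro h
      refine Or.inr (Or.inr ⟨by rw [h, neg_neg], ?_⟩)
      rw [abs_zero]; exact abs_nonneg x
  · intro x y z
    rw [mem_tradd, mem_tradd]
    unfold M
    simp only [abs_neg, neg_neg]
    constructor
    · rintro (⟨h, h'⟩ | ⟨h, h'⟩ | ⟨h, h'⟩)
      · exact Or.inl ⟨h.symm, by rw [h]; exact h'⟩
      · exact Or.inr (Or.inr ⟨h, by rw [h, abs_neg]; exact h'⟩)
      · exact Or.inr (Or.inl ⟨h, by rw [← h]; exact h'⟩)
    · rintro (⟨h, h'⟩ | ⟨h, h'⟩ | ⟨h, h'⟩)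
      · exact Or.inl ⟨h.symm, by rw [h]; exact h'⟩
      · exact Or.inr (Or.inr ⟨h, by rw [h]; exact h'⟩)
      · exact Or.inr (Or.inl ⟨h, by rw [h, abs_neg] at h'; exact h'⟩)
  · intro t x y
    rintro w ⟨s, hs, hw⟩
    rw [mem_tradd] at hs
    rw [mem_tradd]
    unfold M at hs ⊢
    have hw' : w = t * s := hw.symm
    subst hw'
    rcases hs with ⟨h, h'⟩ | ⟨h, h'⟩ | ⟨h, h'⟩
    · exact Or.inl ⟨by rw [h], (by
        rw [abs_mul, abs_mul]
        exact mul_le_mul_of_nonneg_left h' (abs_nonneg t))⟩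
    · exact Or.inr (Or.inl ⟨by rw [h], (by
        rw [abs_mul, abs_mul]
        exact mul_le_mul_of_nonneg_left h' (abs_nonneg t))⟩)
    · refine Or.inr (Or.inr ⟨by rw [h]; ring, ?_⟩)
      rw [abs_mul, abs_mul]
      exact mul_le_mul_of_nonneg_left h' (abs_nonneg t)
end

section
/- Let K be a field equipped with a nonarchimedean absolute value |·| : K → ℝ, and let γ be a real number with 0 < γ < 1. Then for all x, y ∈ K, the set {x·g + y·h : g, h ∈ K, |g − 1| ≤ γ, |h − 1| ≤ γ} is exactly the closed ball {z ∈ K : |z − (x + y)| ≤ γ·max(|x|, |y|)}. -/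
/-!
Since `x * g + y * h - (x + y) = x * (g - 1) + y * (h - 1)`, the ultrametric inequality puts every
such sum in the ball. Conversely, if `|y| ≤ |x|`, a point `z` of the ball is reached with `h = 1`
and `g = 1 + (z - (x + y)) / x`.
-/

namespace AbsoluteValue

variable {K : Type*} [Field K]

def ofIsNonarchimedean (v : K → ℝ) (hnn : ∀ x, 0 ≤ v x) (hzero : ∀ x, v x = 0 ↔ x = 0)
    (hmul : ∀ x y, v (x * y) = v x * v y) (hna : IsNonarchimedean v) : AbsoluteValue K ℝ where
  toFun := v
  map_mul' := hmul
  nonneg' := hnn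
  eq_zero' := hzero
  add_le' x y := (hna x y).trans (max_le_add_of_nonneg (hnn x) (hnn y))

variable (v : AbsoluteValue K ℝ) {γ : ℝ}

theorem mul_add_mul_sub_add_le (hv : IsNonarchimedean v) {x y g h : K} (hg : v (g - 1) ≤ γ)
    (hh : v (h - 1) ≤ γ) : v (x * g + y * h - (x + y)) ≤ γ * max (v x) (v y) := by
  have hγ : 0 ≤ γ := (v.nonneg _).trans hg
  rw [show x * g + y * h - (x + y) = x * (g - 1) + y * (h - 1) by ring]
  refine (hv _ _).trans (max_le ?_ ?_) <;> rw [map_mul, mul_comm]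
  · exact mul_le_mul hg (le_max_left _ _) (v.nonneg _) hγ
  · exact mul_le_mul hh (le_max_right _ _) (v.nonneg _) hγ

theorem exists_eq_mul_of_le_mul (hγ : 0 ≤ γ) {d x : K} (hd : v d ≤ γ * v x) :
    ∃ e, v e ≤ γ ∧ d = x * e := by
  by_cases hx : x = 0
  · subst hx
    rw [map_zero, mul_zero, v.nonpos_iff] at hd
    exact ⟨0, by simpa using hγ, by simp [hd]⟩
  · refine ⟨d / x, ?_, (mul_div_cancel₀ d hx).symm⟩
    rwa [map_div₀, div_le_iff₀ (v.pos hx)]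

theorem exists_mul_add_mul_eq_of_le (hγ : 0 ≤ γ) {x y z : K} (hxy : v y ≤ v x)
    (hz : v (z - (x + y)) ≤ γ * max (v x) (v y)) :
    ∃ g h : K, v (g - 1) ≤ γ ∧ v (h - 1) ≤ γ ∧ z = x * g + y * h := by
  rw [max_eq_left hxy] at hz
  obtain ⟨e, he, hze⟩ := v.exists_eq_mul_of_le_mul hγ hz
  refine ⟨1 + e, 1, by simpa using he, by simpa using hγ, ?_⟩
  linear_combination hze

theorem setOf_mul_add_mul_eq (hv : IsNonarchimedean v) (hγ : 0 ≤ γ) (x y : K) :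
    {z : K | ∃ g h : K, v (g - 1) ≤ γ ∧ v (h - 1) ≤ γ ∧ z = x * g + y * h} =
      {z : K | v (z - (x + y)) ≤ γ * max (v x) (v y)} := by
  ext z
  constructor
  · rintro ⟨g, h, hg, hh, rfl⟩
    exact v.mul_add_mul_sub_add_le hv hg hh
  · intro hz
    rcases le_total (v y) (v x) with hxy | hyx
    · exact v.exists_mul_add_mul_eq_of_le hγ hxy hz
    · rw [add_comm x, max_comm] at hz
      obtain ⟨h, g, hh, hg, rfl⟩ := v.exists_mul_add_mul_eq_of_le hγ hyx hz
      exact ⟨g, h, hg, hh, add_comm _ _⟩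

end AbsoluteValue

theorem stmt4_general (K : Type) [Field K] (v : K → ℝ)
    (hnn : ∀ x : K, 0 ≤ v x) (hzero : ∀ x : K, v x = 0 ↔ x = 0)
    (hmul : ∀ x y : K, v (x * y) = v x * v y)
    (hna : ∀ x y : K, v (x + y) ≤ max (v x) (v y))
    (γ : ℝ) (hγ0 : 0 < γ) (x y : K) :
    {z : K | ∃ g h : K, v (g - 1) ≤ γ ∧ v (h - 1) ≤ γ ∧ z = x * g + y * h} =
      {z : K | v (z - (x + y)) ≤ γ * max (v x) (v y)} :=
  (AbsoluteValue.ofIsNonarchimedean v hnn hzero hmul hna).setOf_mul_add_mul_eq hna hγ0.le x y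

theorem stmt4 (K : Type) [Field K] (v : K → ℝ)
    (hnn : ∀ x : K, 0 ≤ v x) (hzero : ∀ x : K, v x = 0 ↔ x = 0)
    (hmul : ∀ x y : K, v (x * y) = v x * v y)
    (hna : ∀ x y : K, v (x + y) ≤ max (v x) (v y))
    (γ : ℝ) (hγ0 : 0 < γ) (hγ1 : γ < 1) (x y : K) :
    {z : K | ∃ g h : K, v (g - 1) ≤ γ ∧ v (h - 1) ≤ γ ∧ z = x * g + y * h} =
      {z : K | v (z - (x + y)) ≤ γ * max (v x) (v y)} :=
  stmt4_general K v hnn hzero hmul hna γ hγ0 x y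
end

section
/- Let H be a discretely valued hyperfield whose absolute value takes some value other than 0 and 1 and whose norm ρ_H is positive (equivalently, H is not a field). Let i be an integer and let x, x', y, y' ∈ H satisfy |x|, |x'|, |y|, |y'| ≤ θ_H^i, d(x, x') ≤ ρ_H·θ_H^i and d(y, y') ≤ ρ_H·θ_H^i. Then for every z ∈ x + y and every z' ∈ x' + y' one has d(z, z') ≤ ρ_H·θ_H^i. (Consequently the multivalued addition of H descends to a single-valued abelian group operation on the quotient of {x : |x| ≤ θ_H^i} by the relation d(x, y) ≤ ρ_H·θ_H^i.) -/
/-- A (Krasner) valued hyperfield: a hyperfield with a multivalued addition,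
single-valued multiplication, an absolute value, the induced distance `dist`,
and the norm `rho`. -/
structure ValuedHyperfield where
  carrier : Type
  add : carrier → carrier → Set carrier
  mul : carrier → carrier → carrier
  zero : carrier
  one : carrier
  neg : carrier → carrier
  abs : carrier → ℝ
  dist : carrier → carrier → ℝ
  rho : ℝ
  add_comm : ∀ x y, add x y = add y x
  add_assoc : ∀ x y z, (⋃ t ∈ add x y, add t z) = ⋃ t ∈ add y z, add x t
  add_zero : ∀ x, add x zero = {x}
  neg_mem : ∀ x, zero ∈ add x (neg x)
  neg_unique : ∀ x y, zero ∈ add x y → y = neg x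
  reverse : ∀ x y z, x ∈ add y (neg z) ↔ y ∈ add x z
  mul_comm : ∀ x y, mul x y = mul y x
  mul_assoc : ∀ x y z, mul (mul x y) z = mul x (mul y z)
  mul_one : ∀ x, mul x one = x
  one_ne_zero : one ≠ zero
  mul_inv : ∀ x, x ≠ zero → ∃ y, mul x y = one
  distrib : ∀ x y z, (fun t => mul t z) '' add x y ⊆ add (mul x z) (mul y z)
  abs_nonneg : ∀ x, 0 ≤ abs x
  abs_eq_zero_iff : ∀ x, abs x = 0 ↔ x = zero
  abs_mul : ∀ x y, abs (mul x y) = abs x * abs y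
  abs_add_le : ∀ x y z, z ∈ add x y → abs z ≤ max (abs x) (abs y)
  abs_add_unique : ∀ x y, zero ∉ add x y →
    ∀ z w, z ∈ add x y → w ∈ add x y → abs z = abs w
  dist_self : ∀ x, dist x x = 0
  dist_eq : ∀ x y z, x ≠ y → z ∈ add x (neg y) → dist x y = abs z
  rho_nonneg : 0 ≤ rho
  rho_ball : ∀ x y, (∃ w, add x y = {z | dist z w ≤ rho * max (abs x) (abs y)}) ∨
      (∃ w, add x y = {z | dist z w < rho * max (abs x) (abs y)})
  rho_min : ∀ r : ℝ, 0 ≤ r →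
      (∀ x y, (∃ w, add x y = {z | dist z w ≤ r * max (abs x) (abs y)}) ∨
        (∃ w, add x y = {z | dist z w < r * max (abs x) (abs y)})) → rho ≤ r

/-- The valuation is discrete: every nonzero value of the absolute value is an
isolated point of the image of the absolute value. -/
def ValuedHyperfield.Discrete (V : ValuedHyperfield) : Prop :=
  ∀ r ∈ Set.range V.abs, r ≠ 0 →
    ∃ ε > (0 : ℝ), ∀ s ∈ Set.range V.abs, |s - r| < ε → s = r

/-- `θ` is the largest absolute value which is strictly less than 1, attained
at some nonzero element. -/
def ValuedHyperfield.IsTheta (V : ValuedHyperfield) (θ : ℝ) : Prop :=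
  (∃ x, x ≠ V.zero ∧ V.abs x = θ) ∧ θ < 1 ∧
    ∀ x, x ≠ V.zero → V.abs x < 1 → V.abs x ≤ θ



namespace ValuedHyperfield
variable (V : ValuedHyperfield)

lemma abs_zero' : V.abs V.zero = 0 := (V.abs_eq_zero_iff _).mpr rfl

lemma zero_mul' (z : V.carrier) : V.mul V.zero z = V.zero := by
  rw [← V.abs_eq_zero_iff, V.abs_mul, V.abs_zero', zero_mul]

lemma neg_zero' : V.neg V.zero = V.zero := by
  have h0 : V.zero ∈ V.add V.zero V.zero := by rw [V.add_zero]; rfl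
  exact (V.neg_unique _ _ h0).symm

lemma neg_neg' (x : V.carrier) : V.neg (V.neg x) = x := by
  have h := V.neg_mem x
  rw [V.add_comm] at h
  exact (V.neg_unique _ _ h).symm

lemma one_mul' (x : V.carrier) : V.mul V.one x = x := by rw [V.mul_comm, V.mul_one]

lemma neg_eq' (w : V.carrier) : V.neg w = V.mul (V.neg V.one) w := by
  have h0 : V.zero ∈ V.add V.one (V.neg V.one) := V.neg_mem V.one
  have hmem : V.mul V.zero w ∈ V.add (V.mul V.one w) (V.mul (V.neg V.one) w) :=
    V.distrib V.one (V.neg V.one) w ⟨_, h0, rfl⟩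
  rw [V.zero_mul', V.one_mul'] at hmem
  exact (V.neg_unique _ _ hmem).symm

lemma abs_one' : V.abs V.one = 1 := by
  have h := V.abs_mul V.one V.one
  rw [V.mul_one] at h
  have hne : V.abs V.one ≠ 0 := fun h0 => V.one_ne_zero ((V.abs_eq_zero_iff _).mp h0)
  have h2 : V.abs V.one * (V.abs V.one - 1) = 0 := by nlinarith [h]
  rcases mul_eq_zero.mp h2 with h1 | h1
  · exact absurd h1 hne
  · linarith

lemma abs_neg_one' : V.abs (V.neg V.one) = 1 := by
  have h : V.mul (V.neg V.one) (V.neg V.one) = V.one := by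
    rw [← V.neg_eq' (V.neg V.one), V.neg_neg']
  have h2 := V.abs_mul (V.neg V.one) (V.neg V.one)
  rw [h, V.abs_one'] at h2
  have hn := V.abs_nonneg (V.neg V.one)
  nlinarith [sq_nonneg (V.abs (V.neg V.one) - 1), sq_nonneg (V.abs (V.neg V.one) + 1)]

lemma abs_neg' (w : V.carrier) : V.abs (V.neg w) = V.abs w := by
  rw [V.neg_eq', V.abs_mul, V.abs_neg_one', one_mul]

lemma add_nonempty (hρ : 0 < V.rho) (x y : V.carrier) : (V.add x y).Nonempty := by
  rcases V.rho_ball x y with ⟨w, hw⟩ | ⟨w, hw⟩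
  · refine ⟨w, ?_⟩
    rw [hw]
    have : (0:ℝ) ≤ V.rho * max (V.abs x) (V.abs y) :=
      mul_nonneg V.rho_nonneg (le_trans (V.abs_nonneg x) (le_max_left _ _))
    simpa [V.dist_self] using this
  · by_cases hx0 : x = V.zero
    · by_cases hy0 : y = V.zero
      · subst hx0; subst hy0
        rw [V.add_zero]; exact ⟨V.zero, rfl⟩
      · refine ⟨w, ?_⟩
        rw [hw]
        have hy : 0 < V.abs y := lt_of_le_of_ne (V.abs_nonneg y)
          (fun h => hy0 ((V.abs_eq_zero_iff y).mp h.symm))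
        have : 0 < V.rho * max (V.abs x) (V.abs y) :=
          mul_pos hρ (lt_of_lt_of_le hy (le_max_right _ _))
        simpa [V.dist_self] using this
    · refine ⟨w, ?_⟩
      rw [hw]
      have hx : 0 < V.abs x := lt_of_le_of_ne (V.abs_nonneg x)
        (fun h => hx0 ((V.abs_eq_zero_iff x).mp h.symm))
      have : 0 < V.rho * max (V.abs x) (V.abs y) :=
        mul_pos hρ (lt_of_lt_of_le hx (le_max_left _ _))
      simpa [V.dist_self] using this

lemma dist_zero' (a : V.carrier) (ha : a ≠ V.zero) : V.dist a V.zero = V.abs a :=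
  V.dist_eq a V.zero a ha (by rw [V.neg_zero', V.add_zero]; rfl)

lemma dist_symm (hρ : 0 < V.rho) (x y : V.carrier) : V.dist x y = V.dist y x := by
  by_cases hxy : x = y
  · subst hxy; rfl
  · obtain ⟨w, hw⟩ := V.add_nonempty hρ x (V.neg y)
    have hw' : w ∈ V.add x (V.neg y) := hw
    have h1 : x ∈ V.add w y := (V.reverse w x y).mp hw'
    have h2 : y ∈ V.add x (V.neg w) := by
      refine (V.reverse y x w).mpr ?_
      rwa [V.add_comm] at h1
    have h3 : V.neg w ∈ V.add y (V.neg x) := by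
      refine (V.reverse (V.neg w) y x).mpr ?_
      rwa [V.add_comm] at h2
    rw [V.dist_eq x y w hxy hw', V.dist_eq y x (V.neg w) (Ne.symm hxy) h3, V.abs_neg']

lemma dist_nonneg' (hρ : 0 < V.rho) (x y : V.carrier) : 0 ≤ V.dist x y := by
  by_cases hxy : x = y
  · subst hxy; rw [V.dist_self]
  · obtain ⟨w, hw⟩ := V.add_nonempty hρ x (V.neg y)
    rw [V.dist_eq x y w hxy hw]; exact V.abs_nonneg w

/-- Elementwise form of associativity. -/
lemma add_assoc' (a b c w : V.carrier) :
    (∃ t ∈ V.add a b, w ∈ V.add t c) ↔ ∃ t ∈ V.add b c, w ∈ V.add a t := by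
  have h := Set.ext_iff.mp (V.add_assoc a b c) w
  simpa [Set.mem_iUnion] using h

/-- Insert a middle term `y`. -/
lemma mem_add_mid {x z : V.carrier} (y : V.carrier) {w : V.carrier} (hw : w ∈ V.add x z) :
    ∃ t ∈ V.add x (V.neg y), ∃ v ∈ V.add y z, w ∈ V.add t v := by
  have h0 : V.zero ∈ V.add (V.neg y) y := by rw [V.add_comm]; exact V.neg_mem y
  have hx : ∃ t ∈ V.add x (V.neg y), x ∈ V.add t y := by
    refine (V.add_assoc' x (V.neg y) y x).mpr ⟨V.zero, h0, ?_⟩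
    rw [V.add_zero]; rfl
  obtain ⟨t, ht, hxt⟩ := hx
  refine ⟨t, ht, ?_⟩
  exact (V.add_assoc' t y z w).mp ⟨x, hxt, hw⟩

lemma dist_tri (hρ : 0 < V.rho) (x y z : V.carrier) :
    V.dist x z ≤ max (V.dist x y) (V.dist y z) := by
  by_cases hxz : x = z
  · subst hxz
    rw [V.dist_self]
    exact le_trans (V.dist_nonneg' hρ x y) (le_max_left _ _)
  by_cases hxy : x = y
  · subst hxy; exact le_max_right _ _
  by_cases hyz : y = z
  · subst hyz; exact le_max_left _ _
  obtain ⟨w, hw⟩ := V.add_nonempty hρ x (V.neg z)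
  obtain ⟨t, ht, v, hv, hwt⟩ := V.mem_add_mid y hw
  rw [V.dist_eq x z w hxz hw, V.dist_eq x y t hxy ht, V.dist_eq y z v hyz hv]
  exact V.abs_add_le t v w hwt

lemma ball_bound (hρ : 0 < V.rho) {x y a b : V.carrier}
    (ha : a ∈ V.add x y) (hb : b ∈ V.add x y) :
    V.dist a b ≤ V.rho * max (V.abs x) (V.abs y) := by
  rcases V.rho_ball x y with ⟨w, hw⟩ | ⟨w, hw⟩
  · rw [hw] at ha hb
    calc V.dist a b ≤ max (V.dist a w) (V.dist w b) := V.dist_tri hρ a w b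
    _ ≤ _ := by
        rw [V.dist_symm hρ w b]
        exact max_le ha hb
  · rw [hw] at ha hb
    calc V.dist a b ≤ max (V.dist a w) (V.dist w b) := V.dist_tri hρ a w b
    _ ≤ _ := by
        rw [V.dist_symm hρ w b]
        exact max_le (le_of_lt ha) (le_of_lt hb)

lemma neg_mem_add {x y z : V.carrier} (hz : z ∈ V.add x y) :
    V.neg z ∈ V.add (V.neg x) (V.neg y) := by
  have h := V.distrib x y (V.neg V.one) ⟨z, hz, rfl⟩
  simp only [V.mul_comm _ (V.neg V.one), ← V.neg_eq'] at h
  exact h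

lemma rearrange {x y x' y' z n w : V.carrier}
    (hz : z ∈ V.add x y) (hn : n ∈ V.add x' y') (hw : w ∈ V.add z n) :
    ∃ a ∈ V.add x x', ∃ b ∈ V.add y y', w ∈ V.add a b := by
  -- w ∈ x + (y + n)
  obtain ⟨t, ht, hwt⟩ := (V.add_assoc' x y n w).mp ⟨z, hz, hw⟩
  -- t ∈ (y + x') + y'
  obtain ⟨s, hs, hts⟩ := (V.add_assoc' y x' y' t).mpr ⟨n, hn, ht⟩
  -- w ∈ (x + s) + y'
  obtain ⟨u, hu, hwu⟩ := (V.add_assoc' x s y' w).mpr ⟨t, hts, hwt⟩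
  -- s ∈ x' + y, so u ∈ (x + x') + y
  rw [V.add_comm] at hs
  obtain ⟨a, hax, hua⟩ := (V.add_assoc' x x' y u).mpr ⟨s, hs, hu⟩
  -- w ∈ a + (y + y')
  obtain ⟨b, hby, hwb⟩ := (V.add_assoc' a y y' w).mp ⟨u, hua, hwu⟩
  exact ⟨a, hax, b, hby, hwb⟩

end ValuedHyperfield

theorem stmt6 (V : ValuedHyperfield) (hdisc : V.Discrete)
    (hval : ∃ x : V.carrier, V.abs x ≠ 0 ∧ V.abs x ≠ 1)
    (hρ : 0 < V.rho) (θ : ℝ) (hθ : V.IsTheta θ)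
    (i : ℤ) (x x' y y' : V.carrier)
    (hx : V.abs x ≤ θ ^ i) (hx' : V.abs x' ≤ θ ^ i)
    (hy : V.abs y ≤ θ ^ i) (hy' : V.abs y' ≤ θ ^ i)
    (hdx : V.dist x x' ≤ V.rho * θ ^ i) (hdy : V.dist y y' ≤ V.rho * θ ^ i) :
    ∀ z ∈ V.add x y, ∀ z' ∈ V.add x' y', V.dist z z' ≤ V.rho * θ ^ i := by
  -- θ is positive, hence so is θ ^ i
  obtain ⟨⟨x0, hx0ne, hx0⟩, hθ1, -⟩ := hθ
  have hθpos : 0 < θ := by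
    rw [← hx0]
    exact lt_of_le_of_ne (V.abs_nonneg x0)
      (fun h => hx0ne ((V.abs_eq_zero_iff x0).mp h.symm))
  have hθi : (0:ℝ) < θ ^ i := zpow_pos hθpos i
  have hgoal_nonneg : (0:ℝ) ≤ V.rho * θ ^ i := mul_nonneg V.rho_nonneg hθi.le
  intro z hz z' hz'
  by_cases hzz : z = z'
  · subst hzz; rw [V.dist_self]; exact hgoal_nonneg
  -- pick a witness w ∈ z + (-z')
  obtain ⟨w, hw⟩ := V.add_nonempty hρ z (V.neg z')
  rw [V.dist_eq z z' w hzz hw]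
  have hnz' : V.neg z' ∈ V.add (V.neg x') (V.neg y') := V.neg_mem_add hz'
  obtain ⟨a, ha, b, hb, hwab⟩ := V.rearrange hz hnz' hw
  -- key bound: any element of x + (-x') has absolute value ≤ ρ * θ^i
  have key : ∀ (u u' c : V.carrier), V.abs u ≤ θ ^ i → V.abs u' ≤ θ ^ i →
      V.dist u u' ≤ V.rho * θ ^ i → c ∈ V.add u (V.neg u') → V.abs c ≤ V.rho * θ ^ i := by
    intro u u' c hu hu' hd hc
    by_cases huu : u = u'
    · subst huu
      by_cases hc0 : c = V.zero
      · subst hc0; rw [V.abs_zero']; exact hgoal_nonneg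
      · have hball := V.ball_bound hρ hc (V.neg_mem u)
        rw [V.dist_zero' c hc0] at hball
        calc V.abs c ≤ V.rho * max (V.abs u) (V.abs (V.neg u)) := hball
          _ = V.rho * V.abs u := by rw [V.abs_neg', max_self]
          _ ≤ V.rho * θ ^ i := mul_le_mul_of_nonneg_left hu V.rho_nonneg
    · rw [← V.dist_eq u u' c huu hc]; exact hd
  have hA : V.abs a ≤ V.rho * θ ^ i := key x x' a hx hx' hdx ha
  have hB : V.abs b ≤ V.rho * θ ^ i := key y y' b hy hy' hdy hb
  calc V.abs w ≤ max (V.abs a) (V.abs b) := V.abs_add_le a b w hwab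
    _ ≤ V.rho * θ ^ i := max_le hA hB
end

section
/- Let H₁ and H₂ be valued hyperfields and let f : H₁ → H₂ be a morphism of valued hyperfields. Then for all x, y ∈ H₁ one has d(f(x), f(y)) ≤ d(x, y), and moreover d(f(x), f(y)) = d(x, y) whenever f(x) ≠ f(y). -/
/-- A morphism of valued hyperfields. -/
structure VHHom (V W : ValuedHyperfield) where
  toFun : V.carrier → W.carrier
  map_mul : ∀ x y, toFun (V.mul x y) = W.mul (toFun x) (toFun y)
  preimage_add : ∀ a b, a ∈ Set.range toFun → b ∈ Set.range toFun →
    toFun ⁻¹' (W.add a b) = ⋃ x ∈ toFun ⁻¹' {a}, ⋃ y ∈ toFun ⁻¹' {b}, V.add x y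
  abs_map : ∀ x, W.abs (toFun x) = V.abs x
  fiber_one_ball : (∃ w r, toFun ⁻¹' {W.one} = {z | V.dist z w ≤ r}) ∨
    (∃ w r, toFun ⁻¹' {W.one} = {z | V.dist z w < r})

theorem stmt8 (V W : ValuedHyperfield) (f : VHHom V W) :
    ∀ x y : V.carrier,
      W.dist (f.toFun x) (f.toFun y) ≤ V.dist x y ∧
        (f.toFun x ≠ f.toFun y → W.dist (f.toFun x) (f.toFun y) = V.dist x y) := by

  intro x y
  -- f maps sums into sums
  have map_add : ∀ a b z, z ∈ V.add a b → f.toFun z ∈ W.add (f.toFun a) (f.toFun b) := by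
    intro a b z hz
    have h := f.preimage_add (f.toFun a) (f.toFun b) ⟨a, rfl⟩ ⟨b, rfl⟩
    have : z ∈ f.toFun ⁻¹' (W.add (f.toFun a) (f.toFun b)) := by
      rw [h]
      exact Set.mem_iUnion₂.2 ⟨a, rfl, Set.mem_iUnion₂.2 ⟨b, rfl, hz⟩⟩
    exact this
  -- f zero = zero
  have fzero : f.toFun V.zero = W.zero := by
    rw [← W.abs_eq_zero_iff, f.abs_map, V.abs_eq_zero_iff]
  -- f neg = neg f
  have fneg : ∀ a, f.toFun (V.neg a) = W.neg (f.toFun a) := by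
    intro a
    apply W.neg_unique
    rw [← fzero]
    exact map_add a (V.neg a) V.zero (V.neg_mem a)
  -- x + (-y) is nonempty
  have hne : (V.add x (V.neg y)).Nonempty := by
    have h0 : V.zero ∈ V.add (V.neg y) y := by
      rw [V.add_comm]; exact V.neg_mem y
    have hx : x ∈ ⋃ t ∈ V.add (V.neg y) y, V.add x t := by
      refine Set.mem_iUnion₂.2 ⟨V.zero, h0, ?_⟩
      rw [V.add_zero]; rfl
    rw [← V.add_assoc x (V.neg y) y] at hx
    obtain ⟨t, ht, -⟩ := Set.mem_iUnion₂.1 hx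
    exact ⟨t, ht⟩
  by_cases hfy : f.toFun x = f.toFun y
  · constructor
    · rw [hfy, W.dist_self]
      by_cases hxy : x = y
      · rw [hxy, V.dist_self]
      · obtain ⟨z, hz⟩ := hne
        rw [V.dist_eq x y z hxy hz]
        exact V.abs_nonneg z
    · intro h; exact absurd hfy h
  · have hxy : x ≠ y := fun h => hfy (by rw [h])
    obtain ⟨z, hz⟩ := hne
    have hfz : f.toFun z ∈ W.add (f.toFun x) (W.neg (f.toFun y)) := by
      rw [← fneg]; exact map_add x (V.neg y) z hz
    have heq : W.dist (f.toFun x) (f.toFun y) = V.dist x y := by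
      rw [W.dist_eq _ _ _ hfy hfz, f.abs_map, V.dist_eq x y z hxy hz]
    exact ⟨le_of_eq heq, fun _ => heq⟩
end
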